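/- arXiv:2010.14740 — 6 statements merged into one kernel-verified Lean document; each statement's English description precedes it below -/
import Mathlib

section
/- A bounded operator T on a complex Hilbert space X is similar to an isometry if and only if T is power bounded and power bounded below, i.e., there exist constants α, β > 0 such that α‖x‖ ≤ ‖T^k x‖ ≤ β‖x‖ for all integers k ≥ 0 and every x ∈ X. -/
open ContinuousLinearMap Filter Finset Topology

set_option linter.unusedSectionVars false
set_option maxHeartbeats 1000000

noncomputable section IsomAux

/-- Along any ultrafilter, a bounded complex sequence has a limit. -/
lemma isom_exists_tendsto_of_bounded (U : Ultrafilter ℕ) (c : ℕ → ℂ) {M : ℝ}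
    (h : ∀ n, ‖c n‖ ≤ M) : ∃ L, Tendsto c (U : Filter ℕ) (𝓝 L) := by
  have hmem : ↑(U.map c) ≤ Filter.principal (Metric.closedBall (0:ℂ) M) := by
    rw [Filter.le_principal_iff]
    exact Filter.mem_map.mpr (by
      filter_upwards [] with n
      simpa [Metric.mem_closedBall, dist_eq_norm] using h n)
  obtain ⟨L, -, hL⟩ := (isCompact_closedBall (0:ℂ) M).ultrafilter_le_nhds (U.map c) hmem
  exact ⟨L, hL⟩

/-- A fixed ultrafilter extending `atTop` on `ℕ`. -/
def isomU : Ultrafilter ℕ := Ultrafilter.of atTop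

lemma isomU_le_atTop : (isomU : Filter ℕ) ≤ atTop := Ultrafilter.of_le _

variable {X : Type*} [NormedAddCommGroup X] [InnerProductSpace ℂ X] [CompleteSpace X]

def isomA (T : X →L[ℂ] X) (k : ℕ) (x y : X) : ℂ := inner ℂ ((T ^ k) x) ((T ^ k) y)

def isomC (T : X →L[ℂ] X) (n : ℕ) (x y : X) : ℂ :=
  (n : ℂ)⁻¹ * ∑ k ∈ Finset.range n, isomA T k x y

def isomB (T : X →L[ℂ] X) (x y : X) : ℂ :=
  limUnder (isomU : Filter ℕ) (fun n => isomC T n x y)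

def isomR (T : X →L[ℂ] X) (n : ℕ) (x : X) : ℝ :=
  (n : ℝ)⁻¹ * ∑ k ∈ Finset.range n, ‖(T ^ k) x‖ ^ 2

section
variable (T : X →L[ℂ] X) {α β : ℝ} (hα : 0 < α) (hβ : 0 < β)
  (hb : ∀ (k : ℕ) (x : X), α * ‖x‖ ≤ ‖(T ^ k) x‖ ∧ ‖(T ^ k) x‖ ≤ β * ‖x‖)
include hα hβ hb

lemma isomA_bound : ∀ (k : ℕ) (x y : X), ‖isomA T k x y‖ ≤ β * ‖x‖ * (β * ‖y‖) := by
  intro k x y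
  refine le_trans (norm_inner_le_norm _ _) ?_
  exact mul_le_mul (hb k x).2 (hb k y).2 (norm_nonneg _) (by positivity)

lemma isomC_bound : ∀ (n : ℕ) (x y : X), ‖isomC T n x y‖ ≤ β * ‖x‖ * (β * ‖y‖) := by
  intro n x y
  rcases Nat.eq_zero_or_pos n with hn | hn
  · simp [isomC, hn]; positivity
  · have h1 : ‖∑ k ∈ Finset.range n, isomA T k x y‖ ≤ n * (β * ‖x‖ * (β * ‖y‖)) := by
      refine le_trans (norm_sum_le _ _) ?_
      calc ∑ k ∈ Finset.range n, ‖isomA T k x y‖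
          ≤ ∑ _k ∈ Finset.range n, (β * ‖x‖ * (β * ‖y‖)) :=
            Finset.sum_le_sum (fun k _ => isomA_bound T hα hβ hb k x y)
        _ = n * (β * ‖x‖ * (β * ‖y‖)) := by simp [mul_comm]
    calc ‖isomC T n x y‖ = (n : ℝ)⁻¹ * ‖∑ k ∈ Finset.range n, isomA T k x y‖ := by
          simp [isomC, norm_mul]
      _ ≤ (n : ℝ)⁻¹ * (n * (β * ‖x‖ * (β * ‖y‖))) := by gcongr
      _ = β * ‖x‖ * (β * ‖y‖) := by field_simp

lemma isomB_tendsto (x y : X) :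
    Tendsto (fun n => isomC T n x y) (isomU : Filter ℕ) (𝓝 (isomB T x y)) :=
  tendsto_nhds_limUnder
    (isom_exists_tendsto_of_bounded isomU _ (fun n => isomC_bound T hα hβ hb n x y))

lemma isomB_unique {x y : X} {L : ℂ}
    (h : Tendsto (fun n => isomC T n x y) (isomU : Filter ℕ) (𝓝 L)) : isomB T x y = L :=
  tendsto_nhds_unique (isomB_tendsto T hα hβ hb x y) h

lemma isomB_norm (x y : X) : ‖isomB T x y‖ ≤ β * ‖x‖ * (β * ‖y‖) :=
  le_of_tendsto (isomB_tendsto T hα hβ hb x y).norm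
    (Eventually.of_forall (fun n => isomC_bound T hα hβ hb n x y))

lemma isomB_addr (x y z : X) : isomB T x (y + z) = isomB T x y + isomB T x z := by
  refine isomB_unique T hα hβ hb (Tendsto.congr (fun n => ?_)
    ((isomB_tendsto T hα hβ hb x y).add (isomB_tendsto T hα hβ hb x z)))
  simp [isomC, isomA, inner_add_right, Finset.sum_add_distrib, mul_add]

lemma isomB_smulr (m : ℂ) (x y : X) : isomB T x (m • y) = m * isomB T x y := by
  refine isomB_unique T hα hβ hb (Tendsto.congr (fun n => ?_)
    ((isomB_tendsto T hα hβ hb x y).const_mul m))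
  simp only [isomC, isomA, map_smul, inner_smul_right, ← Finset.mul_sum]
  ring

lemma isomB_conj (x y : X) : isomB T y x = (starRingEnd ℂ) (isomB T x y) := by
  refine isomB_unique T hα hβ hb (Tendsto.congr (fun n => ?_)
    (((Complex.continuous_conj.tendsto _).comp (isomB_tendsto T hα hβ hb x y))))
  simp [isomC, isomA, map_mul, map_sum, Function.comp, ← inner_conj_symm ((T ^ n) x)]

lemma isomB_shift (x y : X) : isomB T (T x) (T y) = isomB T x y := by
  have hshift_eq : ∀ n, isomC T n (T x) (T y)
      = isomC T n x y + (n : ℂ)⁻¹ * (isomA T n x y - isomA T 0 x y) := by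
    intro n
    have ha : ∀ k, isomA T k (T x) (T y) = isomA T (k + 1) x y := by
      intro k
      simp [isomA, pow_succ, mul_apply]
    have hsum : ∑ k ∈ Finset.range n, isomA T (k+1) x y
        = (∑ k ∈ Finset.range n, isomA T k x y) + isomA T n x y - isomA T 0 x y := by
      have h1 := Finset.sum_range_succ' (fun k => isomA T k x y) n
      have h2 := Finset.sum_range_succ (fun k => isomA T k x y) n
      rw [h2] at h1
      linear_combination -h1
    simp only [isomC, ha, hsum]
    ring
  have hrem : Tendsto (fun n : ℕ => (n : ℂ)⁻¹ * (isomA T n x y - isomA T 0 x y))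
      atTop (𝓝 0) := by
    have hg : Tendsto (fun n : ℕ => (n : ℝ)⁻¹ * (2 * (β * ‖x‖ * (β * ‖y‖)))) atTop (𝓝 0) := by
      simpa using (tendsto_inv_atTop_nhds_zero_nat (𝕜 := ℝ)).mul_const (2 * (β * ‖x‖ * (β * ‖y‖)))
    refine squeeze_zero_norm (fun n => ?_) hg
    rw [norm_mul]
    gcongr
    · simp
    · calc ‖isomA T n x y - isomA T 0 x y‖ ≤ ‖isomA T n x y‖ + ‖isomA T 0 x y‖ :=
          norm_sub_le _ _
        _ ≤ β * ‖x‖ * (β * ‖y‖) + β * ‖x‖ * (β * ‖y‖) :=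
          add_le_add (isomA_bound T hα hβ hb n x y) (isomA_bound T hα hβ hb 0 x y)
        _ = 2 * (β * ‖x‖ * (β * ‖y‖)) := by ring
  have htend : Tendsto (fun n => isomC T n (T x) (T y)) (isomU : Filter ℕ)
      (𝓝 (isomB T x y + 0)) := by
    refine Tendsto.congr (fun n => (hshift_eq n).symm) ?_
    exact (isomB_tendsto T hα hβ hb x y).add (hrem.mono_left isomU_le_atTop)
  have := isomB_unique T hα hβ hb htend
  simpa using this

lemma isomC_real (n : ℕ) (x : X) : isomC T n x x = ((isomR T n x : ℝ) : ℂ) := by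
  have h : ∀ k, isomA T k x x = ((‖(T ^ k) x‖ ^ 2 : ℝ) : ℂ) := by
    intro k
    simp [isomA, inner_self_eq_norm_sq_to_K]
  simp only [isomC, isomR, h]
  push_cast
  ring

lemma isomR_low (n : ℕ) (hn : 1 ≤ n) (x : X) : α ^ 2 * ‖x‖ ^ 2 ≤ isomR T n x := by
  have hterm : ∀ k, α ^ 2 * ‖x‖ ^ 2 ≤ ‖(T ^ k) x‖ ^ 2 := by
    intro k
    calc α ^ 2 * ‖x‖ ^ 2 = (α * ‖x‖) ^ 2 := by ring
      _ ≤ ‖(T ^ k) x‖ ^ 2 := by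
          apply pow_le_pow_left₀ (by positivity) (hb k x).1
  have hsum : (n : ℝ) * (α ^ 2 * ‖x‖ ^ 2) ≤ ∑ k ∈ Finset.range n, ‖(T ^ k) x‖ ^ 2 := by
    calc (n : ℝ) * (α ^ 2 * ‖x‖ ^ 2) = ∑ _k ∈ Finset.range n, α ^ 2 * ‖x‖ ^ 2 := by simp
      _ ≤ _ := Finset.sum_le_sum (fun k _ => hterm k)
  have hn' : (0 : ℝ) < n := by exact_mod_cast hn
  have hrw : α ^ 2 * ‖x‖ ^ 2 = (n : ℝ)⁻¹ * ((n : ℝ) * (α ^ 2 * ‖x‖ ^ 2)) := by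
    field_simp
  rw [hrw, isomR]
  gcongr

lemma isomB_low (x : X) : α ^ 2 * ‖x‖ ^ 2 ≤ (isomB T x x).re := by
  have hre : Tendsto (fun n => isomR T n x) (isomU : Filter ℕ) (𝓝 (isomB T x x).re) := by
    have h1 : Tendsto (fun n => (isomC T n x x).re) (isomU : Filter ℕ)
        (𝓝 (isomB T x x).re) :=
      (Complex.continuous_re.tendsto _).comp (isomB_tendsto T hα hβ hb x x)
    refine Tendsto.congr (fun n => ?_) h1
    rw [isomC_real T hα hβ hb, Complex.ofReal_re]
  refine ge_of_tendsto hre ?_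
  have hev : ∀ᶠ n in (atTop : Filter ℕ), α ^ 2 * ‖x‖ ^ 2 ≤ isomR T n x := by
    filter_upwards [eventually_ge_atTop 1] with n hn
    exact isomR_low T hα hβ hb n hn x
  exact hev.filter_mono isomU_le_atTop

end

/-- From a suitable sesquilinear form we build the similarity to an isometry. -/
lemma isom_buildW (T : X →L[ℂ] X) (B : X → X → ℂ) {α C : ℝ} (hα : 0 < α) (hC : 0 ≤ C)
    (haddr : ∀ x y z, B x (y + z) = B x y + B x z)
    (hsmulr : ∀ (m : ℂ) x y, B x (m • y) = m * B x y)
    (hconj : ∀ x y, B y x = (starRingEnd ℂ) (B x y))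
    (hnorm : ∀ x y, ‖B x y‖ ≤ C * ‖x‖ * ‖y‖)
    (hlow : ∀ x, α ^ 2 * ‖x‖ ^ 2 ≤ (B x x).re)
    (hshift : ∀ x y, B (T x) (T y) = B x y) :
    ∃ W W' : X →L[ℂ] X, W ∘L W' = 1 ∧ W' ∘L W = 1 ∧ ∀ x : X, ‖(W ∘L T ∘L W') x‖ = ‖x‖ := by
  -- derived left-linearity
  have haddl : ∀ x y z, B (x + y) z = B x z + B y z := by
    intro x y z
    rw [hconj, hconj (x := z) (y := x), hconj (x := z) (y := y), ← map_add, haddr]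
  have hsmull : ∀ (m : ℂ) x y, B (m • x) y = (starRingEnd ℂ) m * B x y := by
    intro m x y
    rw [hconj, hsmulr, map_mul, ← hconj]
  -- the representing operator S
  have hS : ∃ S : X →L[ℂ] X, ∀ x y, (inner ℂ (S x) y : ℂ) = B x y := by
    have gdef : ∀ x : X, ∃ g : X →L[ℂ] ℂ, (∀ y, g y = B x y) ∧ ‖g‖ ≤ C * ‖x‖ := by
      intro x
      refine ⟨LinearMap.mkContinuous
        { toFun := fun y => B x y,
          map_add' := haddr x,
          map_smul' := fun m y => by simpa using hsmulr m x y } (C * ‖x‖)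
        (fun y => by simpa [mul_assoc] using hnorm x y), fun y => rfl, ?_⟩
      apply LinearMap.mkContinuous_norm_le _ (by positivity)
    choose g hg hgnorm using gdef
    have key : ∀ x y, (inner ℂ ((InnerProductSpace.toDual ℂ X).symm (g x)) y : ℂ) = B x y := by
      intro x y
      rw [InnerProductSpace.toDual_symm_apply, hg]
    refine ⟨LinearMap.mkContinuous
      { toFun := fun x => (InnerProductSpace.toDual ℂ X).symm (g x),
        map_add' := fun x x' => by
          apply ext_inner_right ℂ
          intro v
          rw [inner_add_left, key, key, key, haddl],
        map_smul' := fun m x => by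
          apply ext_inner_right ℂ
          intro v
          rw [RingHom.id_apply, inner_smul_left, key, key, hsmull] }
      C (fun x => by
        simpa [LinearIsometryEquiv.norm_map, mul_comm] using hgnorm x), fun x y => key x y⟩
  obtain ⟨S, hSB⟩ := hS
  have hSsym : (S : X →ₗ[ℂ] X).IsSymmetric := by
    intro x y
    simp only [ContinuousLinearMap.coe_coe]
    rw [hSB, hconj (x := y) (y := x), ← hSB, inner_conj_symm]
  have hSsa : IsSelfAdjoint S := isSelfAdjoint_iff_isSymmetric.mpr hSsym
  have hSre : ∀ x, S.reApplyInnerSelf x = (B x x).re := by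
    intro x
    rw [reApplyInnerSelf_apply, hSB, RCLike.re_to_complex]
  have hSpos : S.IsPositive := by
    refine isPositive_def'.mpr ⟨hSsa, fun x => ?_⟩
    rw [hSre]
    exact le_trans (by positivity) (hlow x)
  have hS0 : (0 : X →L[ℂ] X) ≤ S := (nonneg_iff_isPositive S).mpr hSpos
  -- the constant operator c0 • 1
  set c0 : ℂ := ((α : ℂ)) ^ 2 with hc0
  have hc0sa : IsSelfAdjoint (c0 • (1 : X →L[ℂ] X)) := by
    rw [IsSelfAdjoint, star_smul, star_one]
    congr 1
    simp [hc0, ← Complex.ofReal_pow, Complex.conj_ofReal]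
  have hc0re : ∀ x : X, ((c0 • (1 : X →L[ℂ] X)).reApplyInnerSelf x) = α ^ 2 * ‖x‖ ^ 2 := by
    intro x
    rw [reApplyInnerSelf_apply]
    simp only [smul_apply, one_apply_eq_self, inner_smul_left]
    rw [inner_self_eq_norm_sq_to_K]
    simp [hc0, ← Complex.ofReal_pow, Complex.conj_ofReal, ← Complex.ofReal_mul,
      RCLike.re_to_complex]
  have hc0pos : (0 : X →L[ℂ] X) ≤ c0 • 1 := by
    rw [nonneg_iff_isPositive]
    refine isPositive_def'.mpr ⟨hc0sa, fun x => ?_⟩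
    rw [hc0re]
    positivity
  have hle : c0 • (1 : X →L[ℂ] X) ≤ S := by
    rw [ContinuousLinearMap.le_def]
    refine isPositive_def'.mpr ⟨hSsa.sub hc0sa, fun x => ?_⟩
    have : (S - c0 • 1).reApplyInnerSelf x
        = S.reApplyInnerSelf x - (c0 • (1 : X →L[ℂ] X)).reApplyInnerSelf x := by
      simp only [reApplyInnerSelf_apply, sub_apply, inner_sub_left, map_sub]
    rw [this, hSre, hc0re, sub_nonneg]
    exact hlow x
  have hc0unit : IsUnit (c0 • (1 : X →L[ℂ] X)) := by
    rw [← Algebra.algebraMap_eq_smul_one]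
    have hc0ne : c0 ≠ 0 := pow_ne_zero 2 (Complex.ofReal_ne_zero.mpr hα.ne')
    exact (isUnit_iff_ne_zero.mpr hc0ne).map (algebraMap ℂ (X →L[ℂ] X))
  have hSunit : IsUnit S := CStarAlgebra.isUnit_of_le _ hle ⟨hc0pos, hc0unit⟩
  -- square root
  set W : X →L[ℂ] X := CFC.sqrt S with hWdef
  have hWW : W * W = S := CFC.sqrt_mul_sqrt_self S hS0
  have hWnn : (0 : X →L[ℂ] X) ≤ W := CFC.sqrt_nonneg (a := S)
  have hWsa : IsSelfAdjoint W := IsSelfAdjoint.of_nonneg hWnn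
  set u := hSunit.unit with hudef
  have hu : (u : X →L[ℂ] X) = S := hSunit.unit_spec
  have hcommS : Commute W S := by
    rw [← hWW]
    exact (Commute.refl W).mul_right (Commute.refl W)
  have hcommu : Commute W ((u⁻¹ : (X →L[ℂ] X)ˣ) : X →L[ℂ] X) := by
    refine Commute.units_inv_right ?_
    rw [hu]
    exact hcommS
  refine ⟨W, W * ((u⁻¹ : (X →L[ℂ] X)ˣ) : X →L[ℂ] X), ?_, ?_, ?_⟩
  · rw [← ContinuousLinearMap.mul_def, ← mul_assoc, hWW, ← hu]
    exact u.mul_inv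
  · rw [← ContinuousLinearMap.mul_def, hcommu.eq, mul_assoc, hWW, ← hu]
    exact u.inv_mul
  · -- the isometry property
    have hWnorm : ∀ y : X, ‖W y‖ ^ 2 = (B y y).re := by
      intro y
      have h1 : RCLike.re (inner ℂ (W y) (W y) : ℂ) = ‖W y‖ ^ 2 := inner_self_eq_norm_sq _
      have h2 : (inner ℂ (W y) (W y) : ℂ) = inner ℂ y (S y) := by
        have := isSelfAdjoint_iff_isSymmetric.mp hWsa y (W y)
        simp only [ContinuousLinearMap.coe_coe] at this
        rw [this, ← hWW]
        rfl
      have h3 : (inner ℂ y (S y) : ℂ) = (starRingEnd ℂ) (B y y) := by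
        rw [← inner_conj_symm, hSB]
      rw [← h1, h2, h3, RCLike.re_to_complex, Complex.conj_re]
    intro x
    set z : X := W (((u⁻¹ : (X →L[ℂ] X)ˣ) : X →L[ℂ] X) x) with hz
    have happly : (W ∘L T ∘L (W * ((u⁻¹ : (X →L[ℂ] X)ˣ) : X →L[ℂ] X))) x = W (T z) := by
      simp [hz, ContinuousLinearMap.mul_def]
    have hWWinv : W z = x := by
      have : (W * (W * ((u⁻¹ : (X →L[ℂ] X)ˣ) : X →L[ℂ] X))) x = x := by
        rw [← mul_assoc, hWW, ← hu, u.mul_inv]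
        simp
      simpa [mul_apply, hz] using this
    have e1 : ‖W (T z)‖ ^ 2 = ‖x‖ ^ 2 := by
      rw [hWnorm, hshift, ← hWnorm, hWWinv]
    rw [happly]
    have h4 := congrArg Real.sqrt e1
    rwa [Real.sqrt_sq (norm_nonneg _), Real.sqrt_sq (norm_nonneg _)] at h4

end IsomAux

/-- Proposition 4.2 (a)⇔(b): `T` is similar to an isometry iff `T` is power bounded and
power bounded below: there are `α, β > 0` with `α‖x‖ ≤ ‖T^k x‖ ≤ β‖x‖` for all `k ≥ 0`, `x`. -/
theorem stmt4 {X : Type*} [NormedAddCommGroup X] [InnerProductSpace ℂ X] [CompleteSpace X]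
    (T : X →L[ℂ] X) :
    (∃ W W' : X →L[ℂ] X, W ∘L W' = 1 ∧ W' ∘L W = 1 ∧
        ∀ x : X, ‖(W ∘L T ∘L W') x‖ = ‖x‖) ↔
      ∃ α β : ℝ, 0 < α ∧ 0 < β ∧
        ∀ (k : ℕ) (x : X), α * ‖x‖ ≤ ‖(T ^ k) x‖ ∧ ‖(T ^ k) x‖ ≤ β * ‖x‖ := by
  constructor
  · rintro ⟨W, W', h1, h2, hiso⟩
    rcases subsingleton_or_nontrivial X with hX | hX
    · exact ⟨1, 1, one_pos, one_pos, fun k x => by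
        simp [Subsingleton.elim x 0]⟩
    have h2m : W' * W = 1 := by rw [ContinuousLinearMap.mul_def]; exact h2
    have hid : ∀ y : X, W' (W y) = y := fun y => by
      have := congrArg (fun f : X →L[ℂ] X => f y) h2; simpa using this
    have hpow : ∀ k : ℕ, (W ∘L T ∘L W') ^ k = W ∘L (T ^ k) ∘L W' := by
      intro k
      induction k with
      | zero =>
        simp only [pow_zero, ← ContinuousLinearMap.mul_def, one_mul]
        rw [ContinuousLinearMap.mul_def]; exact h1.symm
      | succ k ih =>
        rw [pow_succ, ih]
        simp only [← ContinuousLinearMap.mul_def, pow_succ, mul_assoc]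
        rw [← mul_assoc W' W, h2m, one_mul]
    have hiso' : ∀ (k : ℕ) (x : X), ‖W ((T ^ k) x)‖ = ‖W x‖ := by
      intro k x
      have h0 : ∀ (k : ℕ) (y : X), ‖((W ∘L T ∘L W') ^ k) y‖ = ‖y‖ := by
        intro k
        induction k with
        | zero => simp
        | succ k ih =>
          intro y
          rw [pow_succ]; rw [ContinuousLinearMap.mul_def, ContinuousLinearMap.comp_apply]
          rw [ih, hiso]
      have := h0 k (W x)
      rw [hpow k] at this
      simpa [hid] using this
    have hWpos : 0 < ‖W‖ := by
      rw [norm_pos_iff]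
      intro h; rw [h] at h1; simp at h1
    have hW'pos : 0 < ‖W'‖ := by
      rw [norm_pos_iff]
      intro h; rw [h] at h1; simp at h1
    refine ⟨(‖W‖ * ‖W'‖)⁻¹, ‖W‖ * ‖W'‖, by positivity, by positivity, fun k x => ?_⟩
    constructor
    · rw [inv_mul_le_iff₀ (by positivity)]
      calc ‖x‖ = ‖W' (W x)‖ := by rw [hid x]
        _ ≤ ‖W'‖ * ‖W x‖ := W'.le_opNorm _
        _ = ‖W'‖ * ‖W ((T ^ k) x)‖ := by rw [hiso' k x]
        _ ≤ ‖W'‖ * (‖W‖ * ‖(T ^ k) x‖) := by gcongr; exact W.le_opNorm _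
        _ = ‖W‖ * ‖W'‖ * ‖(T ^ k) x‖ := by ring
    · calc ‖(T ^ k) x‖ = ‖W' (W ((T ^ k) x))‖ := by rw [hid]
        _ ≤ ‖W'‖ * ‖W ((T ^ k) x)‖ := W'.le_opNorm _
        _ = ‖W'‖ * ‖W x‖ := by rw [hiso' k x]
        _ ≤ ‖W'‖ * (‖W‖ * ‖x‖) := by gcongr; exact W.le_opNorm _
        _ = ‖W‖ * ‖W'‖ * ‖x‖ := by ring
  · rintro ⟨α, β, hα, hβ, hb⟩
    refine isom_buildW T (isomB T) hα (C := β * β) (by positivity)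
      (isomB_addr T hα hβ hb) (isomB_smulr T hα hβ hb) (isomB_conj T hα hβ hb)
      (fun x y => ?_) (fun x => ?_) (isomB_shift T hα hβ hb)
    · calc ‖isomB T x y‖ ≤ β * ‖x‖ * (β * ‖y‖) := isomB_norm T hα hβ hb x y
        _ = β * β * ‖x‖ * ‖y‖ := by ring
    · exact isomB_low T hα hβ hb x
end

section
/- A bounded operator T on a complex Hilbert space X is similar to an isometry if and only if there exist α, β > 0 such that α‖x‖² ≤ (1/n) Σ_{k=0}^{n-1} ‖T^k x‖² ≤ β‖x‖² for all n ≥ 1 and every x ∈ X. -/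
set_option maxHeartbeats 1000000
set_option synthInstance.maxHeartbeats 400000

open ContinuousLinearMap Finset Filter

namespace Stmt5Aux

local notation "⟪" x ", " y "⟫" => @inner ℂ _ _ x y

variable {X : Type*} [NormedAddCommGroup X] [InnerProductSpace ℂ X]

/-- Double Cesàro average of inner products of orbits. -/
noncomputable def csq (T : X →L[ℂ] X) (x y : X) (N : ℕ) : ℂ :=
  (N : ℂ)⁻¹ * ∑ j ∈ range N,
    ((N * N + 1 + j : ℕ) : ℂ)⁻¹ * ∑ k ∈ range (N * N + 1 + j), ⟪(T ^ k) x, (T ^ k) y⟫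

lemma avg_norm_le {N : ℕ} {f : ℕ → ℂ} {C : ℝ} (hC : 0 ≤ C) (hf : ∀ j ∈ range N, ‖f j‖ ≤ C) :
    ‖(N : ℂ)⁻¹ * ∑ j ∈ range N, f j‖ ≤ C := by
  rcases Nat.eq_zero_or_pos N with h | h
  · simp [h, hC]
  have hN : (0 : ℝ) < N := by exact_mod_cast h
  have h1 : ‖∑ j ∈ range N, f j‖ ≤ N * C := by
    refine (norm_sum_le _ _).trans ?_
    calc ∑ j ∈ range N, ‖f j‖ ≤ (range N).card • C := Finset.sum_le_card_nsmul _ _ _ hf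
      _ = N * C := by simp [nsmul_eq_mul]
  calc ‖(N : ℂ)⁻¹ * ∑ j ∈ range N, f j‖ = (N : ℝ)⁻¹ * ‖∑ j ∈ range N, f j‖ := by
        simp [norm_mul]
    _ ≤ (N : ℝ)⁻¹ * (N * C) := by gcongr
    _ = C := by field_simp

lemma avg_le {N : ℕ} (hN : 1 ≤ N) {f : ℕ → ℝ} {C : ℝ} (hf : ∀ j ∈ range N, f j ≤ C) :
    (N : ℝ)⁻¹ * ∑ j ∈ range N, f j ≤ C := by
  have hN' : (0 : ℝ) < N := by exact_mod_cast hN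
  have h1 : ∑ j ∈ range N, f j ≤ N * C := by
    calc ∑ j ∈ range N, f j ≤ (range N).card • C := Finset.sum_le_card_nsmul _ _ _ hf
      _ = N * C := by simp [nsmul_eq_mul]
  calc (N : ℝ)⁻¹ * ∑ j ∈ range N, f j ≤ (N : ℝ)⁻¹ * (N * C) := by gcongr
    _ = C := by field_simp

lemma le_avg {N : ℕ} (hN : 1 ≤ N) {f : ℕ → ℝ} {C : ℝ} (hf : ∀ j ∈ range N, C ≤ f j) :
    C ≤ (N : ℝ)⁻¹ * ∑ j ∈ range N, f j := by
  have hN' : (0 : ℝ) < N := by exact_mod_cast hN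
  have h1 : N * C ≤ ∑ j ∈ range N, f j := by
    calc (N : ℝ) * C = (range N).card • C := by simp [nsmul_eq_mul]
      _ ≤ ∑ j ∈ range N, f j := Finset.card_nsmul_le_sum _ _ _ hf
  calc C = (N : ℝ)⁻¹ * (N * C) := by field_simp
    _ ≤ (N : ℝ)⁻¹ * ∑ j ∈ range N, f j := by gcongr

variable {T : X →L[ℂ] X} {β : ℝ}

lemma norm_inner_le_half (x y : X) (k : ℕ) :
    ‖⟪(T ^ k) x, (T ^ k) y⟫‖ ≤ (‖(T ^ k) x‖ ^ 2 + ‖(T ^ k) y‖ ^ 2) / 2 := by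
  refine (norm_inner_le_norm _ _).trans ?_
  nlinarith [sq_nonneg (‖(T ^ k) x‖ - ‖(T ^ k) y‖)]

lemma inner_avg_le (hβ : 0 ≤ β)
    (hsum : ∀ (x : X) (n : ℕ), ∑ k ∈ range n, ‖(T ^ k) x‖ ^ 2 ≤ β * n * ‖x‖ ^ 2)
    (x y : X) {m : ℕ} (hm : 1 ≤ m) :
    ‖(m : ℂ)⁻¹ * ∑ k ∈ range m, ⟪(T ^ k) x, (T ^ k) y⟫‖ ≤ β / 2 * (‖x‖ ^ 2 + ‖y‖ ^ 2) := by
  have hm' : (0 : ℝ) < m := by exact_mod_cast hm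
  have h1 : ‖∑ k ∈ range m, ⟪(T ^ k) x, (T ^ k) y⟫‖
      ≤ β / 2 * (‖x‖ ^ 2 + ‖y‖ ^ 2) * m := by
    refine (norm_sum_le _ _).trans ?_
    calc ∑ k ∈ range m, ‖⟪(T ^ k) x, (T ^ k) y⟫‖
        ≤ ∑ k ∈ range m, (‖(T ^ k) x‖ ^ 2 + ‖(T ^ k) y‖ ^ 2) / 2 :=
          Finset.sum_le_sum fun k _ => norm_inner_le_half x y k
      _ = ((∑ k ∈ range m, ‖(T ^ k) x‖ ^ 2) + ∑ k ∈ range m, ‖(T ^ k) y‖ ^ 2) / 2 := by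
          rw [← Finset.sum_add_distrib, Finset.sum_div]
      _ ≤ (β * m * ‖x‖ ^ 2 + β * m * ‖y‖ ^ 2) / 2 := by
          gcongr
          exacts [hsum x m, hsum y m]
      _ = β / 2 * (‖x‖ ^ 2 + ‖y‖ ^ 2) * m := by ring
  calc ‖(m : ℂ)⁻¹ * ∑ k ∈ range m, ⟪(T ^ k) x, (T ^ k) y⟫‖
      = (m : ℝ)⁻¹ * ‖∑ k ∈ range m, ⟪(T ^ k) x, (T ^ k) y⟫‖ := by simp [norm_mul]
    _ ≤ (m : ℝ)⁻¹ * (β / 2 * (‖x‖ ^ 2 + ‖y‖ ^ 2) * m) := by gcongr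
    _ = β / 2 * (‖x‖ ^ 2 + ‖y‖ ^ 2) := by field_simp

lemma csq_norm_le (hβ : 0 ≤ β)
    (hsum : ∀ (x : X) (n : ℕ), ∑ k ∈ range n, ‖(T ^ k) x‖ ^ 2 ≤ β * n * ‖x‖ ^ 2)
    (x y : X) (N : ℕ) : ‖csq T x y N‖ ≤ β / 2 * (‖x‖ ^ 2 + ‖y‖ ^ 2) :=
  avg_norm_le (by positivity)
    (fun j _ => inner_avg_le hβ hsum x y (by omega : 1 ≤ N * N + 1 + j))

lemma csq_add_right (x y y' : X) (N : ℕ) :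
    csq T x (y + y') N = csq T x y N + csq T x y' N := by
  simp only [csq, map_add, inner_add_right, Finset.sum_add_distrib, mul_add]

lemma csq_smul_right (a : ℂ) (x y : X) (N : ℕ) :
    csq T x (a • y) N = a * csq T x y N := by
  simp only [csq, map_smul, inner_smul_right, Finset.mul_sum]
  exact Finset.sum_congr rfl fun j _ => Finset.sum_congr rfl fun k _ => by ring

lemma csq_conj (x y : X) (N : ℕ) :
    csq T y x N = (starRingEnd ℂ) (csq T x y N) := by
  simp only [csq, map_mul, map_sum, map_inv₀, map_natCast, inner_conj_symm]

lemma csq_add_left (x x' y : X) (N : ℕ) :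
    csq T (x + x') y N = csq T x y N + csq T x' y N := by
  rw [csq_conj, csq_add_right, map_add, ← csq_conj, ← csq_conj]

lemma csq_smul_left (a : ℂ) (x y : X) (N : ℕ) :
    csq T (a • x) y N = (starRingEnd ℂ) a * csq T x y N := by
  rw [csq_conj, csq_smul_right, map_mul, ← csq_conj]

/-- Real version of the diagonal of `csq`. -/
noncomputable def cR (T : X →L[ℂ] X) (x : X) (N : ℕ) : ℝ :=
  (N : ℝ)⁻¹ * ∑ j ∈ range N,
    ((N * N + 1 + j : ℕ) : ℝ)⁻¹ * ∑ k ∈ range (N * N + 1 + j), ‖(T ^ k) x‖ ^ 2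

lemma csq_self_eq (x : X) (N : ℕ) : csq T x x N = ((cR T x N : ℝ) : ℂ) := by
  simp only [csq, cR, inner_self_eq_norm_sq_to_K]
  push_cast
  rfl

lemma cR_le {x : X} {N : ℕ} (hN : 1 ≤ N)
    (hav : ∀ m : ℕ, 1 ≤ m → (m : ℝ)⁻¹ * ∑ k ∈ range m, ‖(T ^ k) x‖ ^ 2 ≤ β * ‖x‖ ^ 2) :
    cR T x N ≤ β * ‖x‖ ^ 2 :=
  avg_le hN fun j _ => hav _ (by omega)

lemma le_cR {α : ℝ} {x : X} {N : ℕ} (hN : 1 ≤ N)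
    (hav : ∀ m : ℕ, 1 ≤ m → α * ‖x‖ ^ 2 ≤ (m : ℝ)⁻¹ * ∑ k ∈ range m, ‖(T ^ k) x‖ ^ 2) :
    α * ‖x‖ ^ 2 ≤ cR T x N :=
  le_avg hN fun j _ => hav _ (by omega)

lemma sum_shift_le (g : ℕ → ℝ) (hg : ∀ i, 0 ≤ g i) (a N : ℕ) :
    ∑ j ∈ range N, g (a + j) ≤ ∑ i ∈ range (a + N), g i := by
  have h1 : ∑ j ∈ range N, g (a + j) = ∑ i ∈ Finset.Ico a (a + N), g i := by
    rw [Finset.sum_Ico_eq_sum_range]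
    simp
  rw [h1]
  refine Finset.sum_le_sum_of_subset_of_nonneg ?_ fun i _ _ => hg i
  intro i hi
  simp only [Finset.mem_Ico, Finset.mem_range] at *
  omega

lemma csq_shift (hβ : 0 ≤ β)
    (hsum : ∀ (x : X) (n : ℕ), ∑ k ∈ range n, ‖(T ^ k) x‖ ^ 2 ≤ β * n * ‖x‖ ^ 2)
    (x y : X) {N : ℕ} (hN : 1 ≤ N) :
    ‖csq T (T x) (T y) N - csq T x y N‖
      ≤ (3 * β / 2 * (‖x‖ ^ 2 + ‖y‖ ^ 2) + ‖x‖ * ‖y‖) / N := by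
  classical
  set p : ℕ → ℂ := fun k => ⟪(T ^ k) x, (T ^ k) y⟫ with hp
  have hTk : ∀ k : ℕ, (⟪(T ^ k) (T x), (T ^ k) (T y)⟫ : ℂ) = p (k + 1) := by
    intro k
    have h1 : (T ^ (k + 1)) x = (T ^ k) (T x) := by rw [pow_succ, ContinuousLinearMap.mul_apply]
    have h2 : (T ^ (k + 1)) y = (T ^ k) (T y) := by rw [pow_succ, ContinuousLinearMap.mul_apply]
    simp [hp, ← h1, ← h2]
  have key : ∀ m : ℕ,
      ((m : ℂ)⁻¹ * ∑ k ∈ range m, ⟪(T ^ k) (T x), (T ^ k) (T y)⟫)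
        - (m : ℂ)⁻¹ * ∑ k ∈ range m, p k = (m : ℂ)⁻¹ * (p m - p 0) := by
    intro m
    rw [← mul_sub]
    congr 1
    rw [← Finset.sum_sub_distrib]
    calc ∑ k ∈ range m, ((⟪(T ^ k) (T x), (T ^ k) (T y)⟫ : ℂ) - p k)
        = ∑ k ∈ range m, (p (k + 1) - p k) := by
          refine Finset.sum_congr rfl fun k _ => by rw [hTk]
      _ = p m - p 0 := Finset.sum_range_sub p m
  have hdiff : csq T (T x) (T y) N - csq T x y N
      = (N : ℂ)⁻¹ * ∑ j ∈ range N, ((N * N + 1 + j : ℕ) : ℂ)⁻¹ * (p (N * N + 1 + j) - p 0) := by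
    unfold csq
    rw [← mul_sub, ← Finset.sum_sub_distrib]
    congr 1
    exact Finset.sum_congr rfl fun j _ => key _
  rw [hdiff]
  have hn : (1 : ℝ) ≤ (N : ℝ) := by exact_mod_cast hN
  have hn0 : (0 : ℝ) < (N : ℝ) := by linarith
  set Q : ℝ := ‖x‖ ^ 2 + ‖y‖ ^ 2 with hQ
  have hQ0 : 0 ≤ Q := by positivity
  set b : ℝ := ‖x‖ * ‖y‖ with hb
  have hb0 : 0 ≤ b := by positivity
  have hp0 : ‖p 0‖ ≤ b := by
    simpa [hp, hb] using norm_inner_le_norm (𝕜 := ℂ) x y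
  -- termwise bound
  have hterm : ∀ j ∈ range N, ‖((N * N + 1 + j : ℕ) : ℂ)⁻¹ * (p (N * N + 1 + j) - p 0)‖
      ≤ ((N : ℝ) * N)⁻¹ * (‖p (N * N + 1 + j)‖ + b) := by
    intro j _
    have hm1 : (0 : ℝ) < ((N * N + 1 + j : ℕ) : ℝ) := by positivity
    have hNN : ((N : ℝ) * N) ≤ ((N * N + 1 + j : ℕ) : ℝ) := by push_cast; nlinarith
    have hNN0 : (0 : ℝ) < (N : ℝ) * N := by positivity
    calc ‖((N * N + 1 + j : ℕ) : ℂ)⁻¹ * (p (N * N + 1 + j) - p 0)‖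
        = ((N * N + 1 + j : ℕ) : ℝ)⁻¹ * ‖p (N * N + 1 + j) - p 0‖ := by
          rw [norm_mul, norm_inv, Complex.norm_natCast]
      _ ≤ ((N : ℝ) * N)⁻¹ * (‖p (N * N + 1 + j)‖ + b) := by
          refine mul_le_mul ?_ ?_ (norm_nonneg _) (by positivity)
          · exact inv_anti₀ hNN0 hNN
          · exact (norm_sub_le _ _).trans (by gcongr)
  -- sum of ‖p (N*N+1+j)‖
  have hS : ∑ j ∈ range N, ‖p (N * N + 1 + j)‖ ≤ 3 * β / 2 * Q * ((N : ℝ) * N) := by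
    have h1 : ∑ j ∈ range N, ‖p (N * N + 1 + j)‖
        ≤ ∑ j ∈ range N, (‖(T ^ (N * N + 1 + j)) x‖ ^ 2 + ‖(T ^ (N * N + 1 + j)) y‖ ^ 2) / 2 :=
      Finset.sum_le_sum fun j _ => norm_inner_le_half x y _
    have h2 : ∑ j ∈ range N, (‖(T ^ (N * N + 1 + j)) x‖ ^ 2 + ‖(T ^ (N * N + 1 + j)) y‖ ^ 2) / 2
        ≤ ((∑ i ∈ range (N * N + 1 + N), ‖(T ^ i) x‖ ^ 2)
            + ∑ i ∈ range (N * N + 1 + N), ‖(T ^ i) y‖ ^ 2) / 2 := by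
      rw [← Finset.sum_div]
      gcongr
      calc ∑ j ∈ range N, (‖(T ^ (N * N + 1 + j)) x‖ ^ 2 + ‖(T ^ (N * N + 1 + j)) y‖ ^ 2)
          ≤ ∑ i ∈ range (N * N + 1 + N), (‖(T ^ i) x‖ ^ 2 + ‖(T ^ i) y‖ ^ 2) :=
            sum_shift_le (fun i => ‖(T ^ i) x‖ ^ 2 + ‖(T ^ i) y‖ ^ 2)
              (fun i => by positivity) (N * N + 1) N
        _ = _ := Finset.sum_add_distrib
    have h3 : (∑ i ∈ range (N * N + 1 + N), ‖(T ^ i) x‖ ^ 2)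
        ≤ β * (N * N + 1 + N : ℕ) * ‖x‖ ^ 2 := hsum x _
    have h4 : (∑ i ∈ range (N * N + 1 + N), ‖(T ^ i) y‖ ^ 2)
        ≤ β * (N * N + 1 + N : ℕ) * ‖y‖ ^ 2 := hsum y _
    have h5 : ((N * N + 1 + N : ℕ) : ℝ) ≤ 3 * ((N : ℝ) * N) := by push_cast; nlinarith
    calc ∑ j ∈ range N, ‖p (N * N + 1 + j)‖
        ≤ ((∑ i ∈ range (N * N + 1 + N), ‖(T ^ i) x‖ ^ 2)
            + ∑ i ∈ range (N * N + 1 + N), ‖(T ^ i) y‖ ^ 2) / 2 := h1.trans h2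
      _ ≤ (β * (N * N + 1 + N : ℕ) * ‖x‖ ^ 2 + β * (N * N + 1 + N : ℕ) * ‖y‖ ^ 2) / 2 := by
          gcongr
      _ = β / 2 * ((N * N + 1 + N : ℕ) : ℝ) * Q := by rw [hQ]; ring
      _ ≤ β / 2 * (3 * ((N : ℝ) * N)) * Q := by gcongr
      _ = 3 * β / 2 * Q * ((N : ℝ) * N) := by ring
  -- assemble
  have hsum2 : ‖∑ j ∈ range N, ((N * N + 1 + j : ℕ) : ℂ)⁻¹ * (p (N * N + 1 + j) - p 0)‖
      ≤ ((N : ℝ) * N)⁻¹ * ((3 * β / 2 * Q * ((N : ℝ) * N)) + (N : ℝ) * b) := by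
    refine (norm_sum_le _ _).trans ?_
    calc ∑ j ∈ range N, ‖((N * N + 1 + j : ℕ) : ℂ)⁻¹ * (p (N * N + 1 + j) - p 0)‖
        ≤ ∑ j ∈ range N, ((N : ℝ) * N)⁻¹ * (‖p (N * N + 1 + j)‖ + b) :=
          Finset.sum_le_sum hterm
      _ = ((N : ℝ) * N)⁻¹ * ((∑ j ∈ range N, ‖p (N * N + 1 + j)‖) + (N : ℝ) * b) := by
          rw [← Finset.mul_sum, Finset.sum_add_distrib, Finset.sum_const, Finset.card_range,
            nsmul_eq_mul]
      _ ≤ ((N : ℝ) * N)⁻¹ * ((3 * β / 2 * Q * ((N : ℝ) * N)) + (N : ℝ) * b) := by gcongr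
  calc ‖(N : ℂ)⁻¹ * ∑ j ∈ range N, ((N * N + 1 + j : ℕ) : ℂ)⁻¹ * (p (N * N + 1 + j) - p 0)‖
      = (N : ℝ)⁻¹ * ‖∑ j ∈ range N, ((N * N + 1 + j : ℕ) : ℂ)⁻¹ * (p (N * N + 1 + j) - p 0)‖ := by
        simp [norm_mul]
    _ ≤ (N : ℝ)⁻¹ * (((N : ℝ) * N)⁻¹ * ((3 * β / 2 * Q * ((N : ℝ) * N)) + (N : ℝ) * b)) := by
        gcongr
    _ ≤ (3 * β / 2 * Q + b) / N := by
        rw [div_eq_mul_inv]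
        have hNN0 : (0 : ℝ) < (N : ℝ) * N := by positivity
        have key : ((N : ℝ) * N)⁻¹ * ((3 * β / 2 * Q * ((N : ℝ) * N)) + (N : ℝ) * b)
            ≤ 3 * β / 2 * Q + b := by
          rw [inv_mul_le_iff₀ hNN0]
          nlinarith [mul_nonneg hb0 (mul_nonneg hn0.le (sub_nonneg.mpr hn))]
        calc (N : ℝ)⁻¹ * (((N : ℝ) * N)⁻¹ * ((3 * β / 2 * Q * ((N : ℝ) * N)) + (N : ℝ) * b))
            ≤ (N : ℝ)⁻¹ * (3 * β / 2 * Q + b) :=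
              mul_le_mul_of_nonneg_left key (by positivity)
          _ = (3 * β / 2 * Q + b) * (N : ℝ)⁻¹ := by ring

end Stmt5Aux

open Stmt5Aux

/-- Proposition 4.2 (a)⇔(d): `T` is similar to an isometry iff there are `α, β > 0` with
`α‖x‖² ≤ (1/n) Σ_{k=0}^{n-1} ‖T^k x‖² ≤ β‖x‖²` for all `n ≥ 1` and every `x`. -/
theorem stmt5 {X : Type*} [NormedAddCommGroup X] [InnerProductSpace ℂ X] [CompleteSpace X]
    (T : X →L[ℂ] X) :
    (∃ W W' : X →L[ℂ] X, W ∘L W' = 1 ∧ W' ∘L W = 1 ∧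
        ∀ x : X, ‖(W ∘L T ∘L W') x‖ = ‖x‖) ↔
      ∃ α β : ℝ, 0 < α ∧ 0 < β ∧
        ∀ (n : ℕ), 1 ≤ n → ∀ x : X,
          α * ‖x‖ ^ 2 ≤ (1 / (n : ℝ)) * ∑ k ∈ Finset.range n, ‖(T ^ k) x‖ ^ 2 ∧
          (1 / (n : ℝ)) * ∑ k ∈ Finset.range n, ‖(T ^ k) x‖ ^ 2 ≤ β * ‖x‖ ^ 2 := by
  constructor
  · rintro ⟨W, W', hWW', hW'W, hiso⟩
    have hWW'ap : ∀ u : X, W (W' u) = u := fun u => by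
      have := ContinuousLinearMap.ext_iff.mp hWW' u
      simpa using this
    have hW'Wap : ∀ u : X, W' (W u) = u := fun u => by
      have := ContinuousLinearMap.ext_iff.mp hW'W u
      simpa using this
    by_cases htriv : ∀ x : X, x = (0 : X)
    · refine ⟨1, 1, one_pos, one_pos, fun n hn x => ?_⟩
      rw [htriv x]
      simp
    · push_neg at htriv
      obtain ⟨x₀, hx₀⟩ := htriv
      have hWne : W ≠ 0 := by
        intro hC
        apply hx₀
        have := hW'Wap x₀
        rw [hC] at this
        simpa using this.symm
      have hW'ne : W' ≠ 0 := by
        intro hC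
        apply hx₀
        have := hWW'ap x₀
        rw [hC] at this
        simpa using this.symm
      have hWn : 0 < ‖W‖ := norm_pos_iff.mpr hWne
      have hW'n : 0 < ‖W'‖ := norm_pos_iff.mpr hW'ne
      set C : ℝ := ‖W‖ * ‖W'‖ with hC
      have hC0 : 0 < C := mul_pos hWn hW'n
      set V : X →L[ℂ] X := W ∘L T ∘L W' with hV
      have hVk : ∀ (k : ℕ) (y : X), ‖(V ^ k) y‖ = ‖y‖ := by
        intro k
        induction k with
        | zero => intro y; simp
        | succ k ih =>
          intro y
          have h1 : (V ^ (k + 1)) y = (V ^ k) (V y) := by rw [pow_succ, ContinuousLinearMap.mul_apply]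
          rw [h1, ih, hiso]
      have hTkap : ∀ (k : ℕ) (x : X), (T ^ k) x = W' ((V ^ k) (W x)) := by
        intro k
        induction k with
        | zero => intro x; simp [hW'Wap]
        | succ k ih =>
          intro x
          have h1 : (V ^ (k + 1)) (W x) = (V ^ k) (V (W x)) := by rw [pow_succ, ContinuousLinearMap.mul_apply]
          have h2 : V (W x) = W (T x) := by
            simp only [hV, comp_apply, hW'Wap]
          have h3 : (T ^ (k + 1)) x = (T ^ k) (T x) := by rw [pow_succ, ContinuousLinearMap.mul_apply]
          rw [h3, ih (T x), h1, h2]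
      have hup : ∀ (k : ℕ) (x : X), ‖(T ^ k) x‖ ≤ C * ‖x‖ := by
        intro k x
        rw [hTkap]
        calc ‖W' ((V ^ k) (W x))‖ ≤ ‖W'‖ * ‖(V ^ k) (W x)‖ := le_opNorm _ _
          _ = ‖W'‖ * ‖W x‖ := by rw [hVk]
          _ ≤ ‖W'‖ * (‖W‖ * ‖x‖) := by gcongr; exact le_opNorm _ _
          _ = C * ‖x‖ := by rw [hC]; ring
      have hlow : ∀ (k : ℕ) (x : X), ‖x‖ ≤ C * ‖(T ^ k) x‖ := by
        intro k x
        have h1 : ‖x‖ ≤ ‖W'‖ * ‖W x‖ := by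
          conv_lhs => rw [← hW'Wap x]
          exact le_opNorm _ _
        have h3 : ‖(V ^ k) (W x)‖ ≤ ‖W‖ * ‖W' ((V ^ k) (W x))‖ := by
          conv_lhs => rw [← hWW'ap ((V ^ k) (W x))]
          exact le_opNorm _ _
        rw [hTkap]
        calc ‖x‖ ≤ ‖W'‖ * ‖W x‖ := h1
          _ = ‖W'‖ * ‖(V ^ k) (W x)‖ := by rw [hVk]
          _ ≤ ‖W'‖ * (‖W‖ * ‖W' ((V ^ k) (W x))‖) := by gcongr
          _ = C * ‖W' ((V ^ k) (W x))‖ := by rw [hC]; ring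
      refine ⟨(C ^ 2)⁻¹, C ^ 2, by positivity, by positivity, fun n hn x => ?_⟩
      have hsq_up : ∀ k, ‖(T ^ k) x‖ ^ 2 ≤ C ^ 2 * ‖x‖ ^ 2 := fun k => by
        have h := hup k x
        nlinarith [norm_nonneg ((T ^ k) x), norm_nonneg x, hC0]
      have hsq_lo : ∀ k, (C ^ 2)⁻¹ * ‖x‖ ^ 2 ≤ ‖(T ^ k) x‖ ^ 2 := fun k => by
        have h := hlow k x
        have h2 : ‖x‖ ^ 2 ≤ C ^ 2 * ‖(T ^ k) x‖ ^ 2 := by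
          nlinarith [norm_nonneg x, norm_nonneg ((T ^ k) x), hC0]
        rw [inv_mul_le_iff₀ (by positivity)]
        exact h2
      simp only [one_div]
      exact ⟨Stmt5Aux.le_avg hn (fun k _ => hsq_lo k),
        Stmt5Aux.avg_le hn (fun k _ => hsq_up k)⟩
  · rintro ⟨α, β, hα, hβ, h⟩
    have hav_le : ∀ (x : X) (m : ℕ), 1 ≤ m →
        (m : ℝ)⁻¹ * ∑ k ∈ Finset.range m, ‖(T ^ k) x‖ ^ 2 ≤ β * ‖x‖ ^ 2 := by
      intro x m hm
      have := (h m hm x).2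
      rwa [one_div] at this
    have hav_ge : ∀ (x : X) (m : ℕ), 1 ≤ m →
        α * ‖x‖ ^ 2 ≤ (m : ℝ)⁻¹ * ∑ k ∈ Finset.range m, ‖(T ^ k) x‖ ^ 2 := by
      intro x m hm
      have := (h m hm x).1
      rwa [one_div] at this
    have hsum : ∀ (x : X) (n : ℕ), ∑ k ∈ Finset.range n, ‖(T ^ k) x‖ ^ 2 ≤ β * n * ‖x‖ ^ 2 := by
      intro x n
      rcases Nat.eq_zero_or_pos n with rfl | hn
      · simp
      have hn0 : (0 : ℝ) < n := by exact_mod_cast hn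
      have h1 := hav_le x n hn
      rw [inv_mul_le_iff₀ hn0] at h1
      calc ∑ k ∈ Finset.range n, ‖(T ^ k) x‖ ^ 2 ≤ (n : ℝ) * (β * ‖x‖ ^ 2) := h1
        _ = β * n * ‖x‖ ^ 2 := by ring
    let U : Ultrafilter ℕ := Ultrafilter.of Filter.atTop
    have hU : (U : Filter ℕ) ≤ Filter.atTop := Ultrafilter.of_le _
    have hex : ∀ x y : X, ∃ z : ℂ, Filter.Tendsto (csq T x y) (U : Filter ℕ) (nhds z) := by
      intro x y
      have hcomp : IsCompact (Metric.closedBall (0 : ℂ) (β / 2 * (‖x‖ ^ 2 + ‖y‖ ^ 2))) :=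
        isCompact_closedBall _ _
      have hle : (Ultrafilter.map (csq T x y) U : Filter ℂ)
          ≤ Filter.principal (Metric.closedBall 0 (β / 2 * (‖x‖ ^ 2 + ‖y‖ ^ 2))) := by
        rw [Ultrafilter.coe_map, Filter.le_principal_iff, Filter.mem_map]
        refine Filter.univ_mem' fun N => ?_
        simp only [Set.mem_preimage, Metric.mem_closedBall, dist_zero_right]
        exact csq_norm_le hβ.le hsum x y N
      obtain ⟨z, -, hz⟩ := hcomp.ultrafilter_le_nhds (Ultrafilter.map (csq T x y) U) hle
      refine ⟨z, ?_⟩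
      show Filter.map (csq T x y) (U : Filter ℕ) ≤ nhds z
      rwa [Ultrafilter.coe_map] at hz
    choose B hB using hex
    have huniq : ∀ {x y : X} {z : ℂ},
        Filter.Tendsto (csq T x y) (U : Filter ℕ) (nhds z) → B x y = z :=
      fun ht => tendsto_nhds_unique (hB _ _) ht
    have hBadd_r : ∀ x y y' : X, B x (y + y') = B x y + B x y' := by
      intro x y y'
      refine huniq ?_
      have h1 : Filter.Tendsto (fun N => csq T x y N + csq T x y' N) (U : Filter ℕ)
          (nhds (B x y + B x y')) := (hB x y).add (hB x y')
      simpa only [← csq_add_right] using h1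
    have hBsmul_r : ∀ (a : ℂ) (x y : X), B x (a • y) = a * B x y := by
      intro a x y
      refine huniq ?_
      have h1 : Filter.Tendsto (fun N => a * csq T x y N) (U : Filter ℕ)
          (nhds (a * B x y)) := (hB x y).const_mul a
      simpa only [← csq_smul_right] using h1
    have hBconj : ∀ x y : X, B y x = (starRingEnd ℂ) (B x y) := by
      intro x y
      refine huniq ?_
      have h1 : Filter.Tendsto (fun N => (starRingEnd ℂ) (csq T x y N)) (U : Filter ℕ)
          (nhds ((starRingEnd ℂ) (B x y))) := by
        exact (Complex.continuous_conj.tendsto _).comp (hB x y)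
      simpa only [← csq_conj] using h1
    have hBadd_l : ∀ x x' y : X, B (x + x') y = B x y + B x' y := by
      intro x x' y
      rw [hBconj y, hBconj y x, hBconj y x', hBadd_r, map_add]
    have hBsmul_l : ∀ (a : ℂ) (x y : X), B (a • x) y = (starRingEnd ℂ) a * B x y := by
      intro a x y
      rw [hBconj y, hBconj y x, hBsmul_r, map_mul]
    have htre : ∀ x : X, Filter.Tendsto (cR T x) (U : Filter ℕ) (nhds ((B x x).re)) := by
      intro x
      have h1 : Filter.Tendsto (fun N => (csq T x x N).re) (U : Filter ℕ)
          (nhds ((B x x).re)) := (Complex.continuous_re.tendsto _).comp (hB x x)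
      simpa only [csq_self_eq, Complex.ofReal_re] using h1
    have hBreal : ∀ x : X, B x x = (((B x x).re : ℝ) : ℂ) := by
      intro x
      refine huniq ?_
      have h1 : Filter.Tendsto (fun N => ((cR T x N : ℝ) : ℂ)) (U : Filter ℕ)
          (nhds (((B x x).re : ℝ) : ℂ)) := (Complex.continuous_ofReal.tendsto _).comp (htre x)
      simpa only [← csq_self_eq] using h1
    have hBre_ge : ∀ x : X, α * ‖x‖ ^ 2 ≤ (B x x).re := by
      intro x
      refine ge_of_tendsto (htre x) ?_
      exact (Filter.eventually_atTop.mpr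
        ⟨1, fun N hN => le_cR hN (fun m hm => hav_ge x m hm)⟩).filter_mono hU
    have hBinv : ∀ x y : X, B (T x) (T y) = B x y := by
      intro x y
      have hshift : Filter.Tendsto (fun N => csq T (T x) (T y) N - csq T x y N)
          Filter.atTop (nhds 0) := by
        refine squeeze_zero_norm' ?_
          (tendsto_const_div_atTop_nhds_zero_nat (3 * β / 2 * (‖x‖ ^ 2 + ‖y‖ ^ 2) + ‖x‖ * ‖y‖))
        exact Filter.eventually_atTop.mpr ⟨1, fun N hN => csq_shift hβ.le hsum x y hN⟩
      have h2 := (hshift.mono_left hU).add (hB x y)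
      have hfeq : (fun N => (csq T (T x) (T y) N - csq T x y N) + csq T x y N)
          = fun N => csq T (T x) (T y) N := funext fun N => by ring
      rw [hfeq, zero_add] at h2
      exact huniq h2
    have hquad : ∀ x y : X, ‖B x y‖ ≤ β / 2 * (‖x‖ ^ 2 + ‖y‖ ^ 2) := by
      intro x y
      have hclosed : IsClosed {z : ℂ | ‖z‖ ≤ β / 2 * (‖x‖ ^ 2 + ‖y‖ ^ 2)} :=
        isClosed_le continuous_norm continuous_const
      exact hclosed.mem_of_tendsto (hB x y)
        (Filter.Eventually.of_forall fun N => csq_norm_le hβ.le hsum x y N)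
    have hBzero_l : ∀ y : X, B 0 y = 0 := fun y => by
      have h1 := hBsmul_l 0 0 y
      simpa using h1
    have hBzero_r : ∀ x : X, B x 0 = 0 := fun x => by
      have h1 := hBsmul_r 0 x 0
      simpa using h1
    have hbound : ∀ x y : X, ‖B x y‖ ≤ β * ‖x‖ * ‖y‖ := by
      intro x y
      rcases eq_or_ne x 0 with rfl | hx
      · simp [hBzero_l]
      rcases eq_or_ne y 0 with rfl | hy
      · simp [hBzero_r]
      have hxn : 0 < ‖x‖ := norm_pos_iff.mpr hx
      have hyn : 0 < ‖y‖ := norm_pos_iff.mpr hy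
      set t : ℝ := ‖y‖ / ‖x‖ with ht
      have ht0 : 0 < t := by positivity
      have h1 := hquad ((t : ℂ) • x) y
      rw [hBsmul_l] at h1
      have h2 : ‖(starRingEnd ℂ) (t : ℂ) * B x y‖ = t * ‖B x y‖ := by
        rw [norm_mul, RCLike.norm_conj, Complex.norm_real, Real.norm_eq_abs, abs_of_pos ht0]
      have h3 : ‖(t : ℂ) • x‖ = ‖y‖ := by
        rw [norm_smul, Complex.norm_real, Real.norm_eq_abs, abs_of_pos ht0, ht]
        field_simp
      rw [h2, h3] at h1
      have h4 : t * ‖B x y‖ ≤ β * ‖y‖ ^ 2 := by linarith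
      rw [ht, div_mul_eq_mul_div, div_le_iff₀ hxn] at h4
      calc ‖B x y‖ = (‖y‖ * ‖B x y‖) / ‖y‖ := by field_simp
        _ ≤ (β * ‖y‖ ^ 2 * ‖x‖) / ‖y‖ := by gcongr
        _ = β * ‖x‖ * ‖y‖ := by field_simp
    -- the operator S
    let φ : X → (X →L[ℂ] ℂ) := fun y =>
      LinearMap.mkContinuous
        { toFun := fun x => B y x
          map_add' := fun a b => hBadd_r y a b
          map_smul' := fun c a => by simpa using hBsmul_r c y a }
        (β * ‖y‖) (fun x => by
          calc ‖B y x‖ ≤ β * ‖y‖ * ‖x‖ := hbound y x)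
    have hφ_apply : ∀ y x : X, φ y x = B y x := fun y x => rfl
    let Sl : X →ₗ[ℂ] X :=
      { toFun := fun y => (InnerProductSpace.toDual ℂ X).symm (φ y)
        map_add' := by
          intro y y'
          have hφadd : φ (y + y') = φ y + φ y' :=
            ContinuousLinearMap.ext fun x => hBadd_l y y' x
          show (InnerProductSpace.toDual ℂ X).symm (φ (y + y'))
              = (InnerProductSpace.toDual ℂ X).symm (φ y)
                + (InnerProductSpace.toDual ℂ X).symm (φ y')
          rw [hφadd, map_add]
        map_smul' := by
          intro c y
          have hφsmul : φ (c • y) = (starRingEnd ℂ) c • φ y :=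
            ContinuousLinearMap.ext fun x => by
              simp only [ContinuousLinearMap.coe_smul', Pi.smul_apply, smul_eq_mul]
              rw [hφ_apply, hφ_apply, hBsmul_l]
          show (InnerProductSpace.toDual ℂ X).symm (φ (c • y))
              = (RingHom.id ℂ) c • (InnerProductSpace.toDual ℂ X).symm (φ y)
          rw [hφsmul, map_smulₛₗ]
          simp [Complex.conj_conj]
        }
    let S : X →L[ℂ] X := Sl.mkContinuous β (fun y => by
      have h1 : ‖(InnerProductSpace.toDual ℂ X).symm (φ y)‖ = ‖φ y‖ :=
        LinearIsometryEquiv.norm_map _ _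
      have h2 : ‖φ y‖ ≤ β * ‖y‖ := LinearMap.mkContinuous_norm_le _ (by positivity) _
      calc ‖Sl y‖ = ‖φ y‖ := h1
        _ ≤ β * ‖y‖ := h2)
    have hS : ∀ y x : X, (inner ℂ (S y) x : ℂ) = B y x := fun y x =>
      InnerProductSpace.toDual_symm_apply
    have hS' : ∀ x y : X, (inner ℂ x (S y) : ℂ) = (starRingEnd ℂ) (B y x) := by
      intro x y
      rw [← inner_conj_symm, hS]
    have hsymm : ∀ x y : X, (inner ℂ (S x) y : ℂ) = inner ℂ x (S y) := by
      intro x y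
      rw [hS, hS', hBconj y x]
    have hreC : ∀ z : ℂ, RCLike.re z = z.re := fun z => rfl
    have hre : ∀ x : X, RCLike.re (inner ℂ (S x) x : ℂ) = (B x x).re := by
      intro x
      rw [hS, hreC]
    have hsa : IsSelfAdjoint S :=
      isSelfAdjoint_iff_isSymmetric.mpr fun x y => hsymm x y
    have hpos : S.IsPositive := by
      refine ⟨isSelfAdjoint_iff_isSymmetric.mp hsa, fun x => ?_⟩
      show (0 : ℝ) ≤ RCLike.re (inner ℂ (S x) x : ℂ)
      rw [hre]
      have := hBre_ge x
      nlinarith [norm_nonneg x, sq_nonneg ‖x‖]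
    have hSnn : (0 : X →L[ℂ] X) ≤ S := (ContinuousLinearMap.nonneg_iff_isPositive S).mpr hpos
    have hunit : IsUnit S := by
      refine isUnit_of_forall_le_norm_inner_map S (c := ⟨α, hα.le⟩) ?_ ?_
      · exact hα
      · intro x
        have h1 : α * ‖x‖ ^ 2 ≤ (B x x).re := hBre_ge x
        calc ‖x‖ ^ 2 * (⟨α, hα.le⟩ : NNReal) = α * ‖x‖ ^ 2 := by
              simp [NNReal.coe_mk]; ring
          _ ≤ (B x x).re := h1
          _ ≤ ‖B x x‖ := Complex.re_le_norm _
          _ = ‖(inner ℂ (S x) x : ℂ)‖ := by rw [hS]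
    set W : X →L[ℂ] X := CFC.sqrt S with hWdef
    have hW0 : (0 : X →L[ℂ] X) ≤ W := CFC.sqrt_nonneg S
    have hWW : W * W = S := CFC.sqrt_mul_sqrt_self S hSnn
    have hWsa : IsSelfAdjoint W :=
      ((ContinuousLinearMap.nonneg_iff_isPositive W).mp hW0).isSelfAdjoint
    have hWsymm : ∀ u v : X, (inner ℂ (W u) v : ℂ) = inner ℂ u (W v) :=
      fun u v => (isSelfAdjoint_iff_isSymmetric.mp hWsa) u v
    have hcomm : Commute W S := by
      rw [← hWW]
      exact (Commute.refl W).mul_right (Commute.refl W)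
    have hcommU : Commute W ↑hunit.unit⁻¹ := by
      have h1 : Commute W ↑hunit.unit := by rwa [IsUnit.unit_spec]
      exact h1.units_inv_right
    refine ⟨W, (↑hunit.unit⁻¹ * W : X →L[ℂ] X), ?_, ?_, ?_⟩
    case _ =>
      show W ∘L ((↑hunit.unit⁻¹ : X →L[ℂ] X) * W) = 1
      rw [← ContinuousLinearMap.mul_def]
      calc W * (↑hunit.unit⁻¹ * W) = (W * ↑hunit.unit⁻¹) * W := by rw [mul_assoc]
        _ = (↑hunit.unit⁻¹ * W) * W := by rw [hcommU.eq]
        _ = ↑hunit.unit⁻¹ * (W * W) := by rw [mul_assoc]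
        _ = ↑hunit.unit⁻¹ * S := by rw [hWW]
        _ = 1 := hunit.val_inv_mul
    case _ =>
      show ((↑hunit.unit⁻¹ : X →L[ℂ] X) * W) ∘L W = 1
      rw [← ContinuousLinearMap.mul_def]
      calc (↑hunit.unit⁻¹ * W) * W = ↑hunit.unit⁻¹ * (W * W) := by rw [mul_assoc]
        _ = ↑hunit.unit⁻¹ * S := by rw [hWW]
        _ = 1 := hunit.val_inv_mul
    case _ =>
      intro x
      have hWW'mul : W * (↑hunit.unit⁻¹ * W) = 1 := by
        calc W * (↑hunit.unit⁻¹ * W) = (W * ↑hunit.unit⁻¹) * W := by rw [mul_assoc]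
          _ = (↑hunit.unit⁻¹ * W) * W := by rw [hcommU.eq]
          _ = ↑hunit.unit⁻¹ * (W * W) := by rw [mul_assoc]
          _ = ↑hunit.unit⁻¹ * S := by rw [hWW]
          _ = 1 := hunit.val_inv_mul
      have hWz : W ((↑hunit.unit⁻¹ * W : X →L[ℂ] X) x) = x := by
        have h1 := congrArg (fun f : X →L[ℂ] X => f x) hWW'mul
        simpa [ContinuousLinearMap.mul_apply] using h1
      have hn2 : ∀ u : X, ‖W u‖ ^ 2 = (B u u).re := by
        intro u
        have h1 : (inner ℂ (W u) (W u) : ℂ) = inner ℂ (S u) u := by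
          rw [hWsymm]
          rw [show W (W u) = S u from by rw [← ContinuousLinearMap.mul_apply, hWW]]
          exact (hsymm u u).symm
        have h2 : ‖W u‖ ^ 2 = RCLike.re (inner ℂ (W u) (W u) : ℂ) :=
          (inner_self_eq_norm_sq _).symm
        rw [h2, h1, hreC, hS]
      have hx2 : ‖(W ∘L T ∘L (↑hunit.unit⁻¹ * W : X →L[ℂ] X)) x‖ ^ 2 = ‖x‖ ^ 2 := by
        have h1 : (W ∘L T ∘L (↑hunit.unit⁻¹ * W : X →L[ℂ] X)) x
            = W (T ((↑hunit.unit⁻¹ * W : X →L[ℂ] X) x)) := rfl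
        rw [h1, hn2, hBinv, ← hn2, hWz]
      have h2 := congrArg Real.sqrt hx2
      rwa [Real.sqrt_sq (norm_nonneg _), Real.sqrt_sq (norm_nonneg _)] at h2
end

section
/- Let T be a contraction on a complex Hilbert space with asymptotic limit A (the strong limit of T*^n T^n). Then the kernel of I − A equals {x : ‖T^n x‖ = ‖x‖ for all n ≥ 1}; consequently T is an isometry if and only if A = I. -/
open ContinuousLinearMap Filter

local notation "⟪" x ", " y "⟫" => @inner ℂ _ _ x y

/-- Proposition 5.1(j): for a contraction `T` with asymptotic limit `A`,
`ker (I - A) = {x : ‖T^n x‖ = ‖x‖ for all n ≥ 1}`; consequently `T` is an isometry iff `A = I`. -/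
theorem stmt9 {X : Type*} [NormedAddCommGroup X] [InnerProductSpace ℂ X] [CompleteSpace X]
    (T A : X →L[ℂ] X) (hT : ‖T‖ ≤ 1)
    (hA : ∀ x : X, Tendsto (fun n : ℕ => (((adjoint T) ^ n) ∘L (T ^ n)) x) atTop (nhds (A x))) :
    (∀ x : X, A x = x ↔ ∀ n : ℕ, 1 ≤ n → ‖(T ^ n) x‖ = ‖x‖) ∧
      ((∀ x : X, ‖T x‖ = ‖x‖) ↔ A = 1) := by
  have hTn : ∀ n : ℕ, ‖T ^ n‖ ≤ 1 := by
    intro n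
    induction n with
    | zero => simpa [ContinuousLinearMap.one_def] using (norm_id_le : ‖ContinuousLinearMap.id ℂ X‖ ≤ 1)
    | succ n ih =>
        calc ‖T ^ (n+1)‖ = ‖T ^ n * T‖ := by rw [pow_succ]
        _ ≤ ‖T ^ n‖ * ‖T‖ := norm_mul_le _ _
        _ ≤ 1 * 1 := mul_le_mul ih hT (norm_nonneg _) zero_le_one
        _ = 1 := one_mul 1
  have hpow : ∀ (n : ℕ) (x : X), ‖(T ^ n) x‖ ≤ ‖x‖ := fun n x =>
    ((T ^ n).le_opNorm x).trans (by
      have := hTn n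
      nlinarith [norm_nonneg x])
  have hmono : ∀ (x : X) (n m : ℕ), n ≤ m → ‖(T ^ m) x‖ ≤ ‖(T ^ n) x‖ := by
    intro x n m h
    obtain ⟨k, rfl⟩ := Nat.exists_eq_add_of_le h
    have : (T ^ (n + k)) x = (T ^ k) ((T ^ n) x) := by
      rw [add_comm, pow_add]; rfl
    rw [this]; exact hpow k _
  have hadjpow : ∀ n : ℕ, (adjoint T) ^ n = adjoint (T ^ n) := by
    intro n
    rw [← star_eq_adjoint, ← star_eq_adjoint, ← star_pow]
  have hsq : ∀ x : X, Tendsto (fun n : ℕ => ‖(T ^ n) x‖ ^ 2) atTop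
      (nhds (Complex.re ⟪A x, x⟫)) := by
    intro x
    have h1 : Tendsto (fun n : ℕ => ⟪(((adjoint T) ^ n) ∘L (T ^ n)) x, x⟫) atTop
        (nhds ⟪A x, x⟫) := (hA x).inner tendsto_const_nhds
    have h2 : ∀ n : ℕ, ⟪(((adjoint T) ^ n) ∘L (T ^ n)) x, x⟫ = ((‖(T ^ n) x‖ : ℂ)) ^ 2 := by
      intro n
      rw [comp_apply, hadjpow, adjoint_inner_left, inner_self_eq_norm_sq_to_K]
      norm_cast
    have h3 : Tendsto (fun n : ℕ => ((‖(T ^ n) x‖ : ℂ)) ^ 2) atTop (nhds ⟪A x, x⟫) := by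
      simpa only [h2] using h1
    have h4 := (Complex.continuous_re.tendsto _).comp h3
    simpa [Function.comp_def, ← Complex.ofReal_pow] using h4
  have main : ∀ x : X, A x = x ↔ ∀ n : ℕ, 1 ≤ n → ‖(T ^ n) x‖ = ‖x‖ := by
    intro x
    constructor
    · intro h n hn
      have hlim : Tendsto (fun n : ℕ => ‖(T ^ n) x‖ ^ 2) atTop (nhds (‖x‖ ^ 2)) := by
        have := hsq x
        rw [h, inner_self_eq_norm_sq_to_K] at this
        simpa [← Complex.ofReal_pow] using this
      have hle : ‖x‖ ^ 2 ≤ ‖(T ^ n) x‖ ^ 2 :=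
        le_of_tendsto hlim (eventually_atTop.2 ⟨n, fun m hm =>
          pow_le_pow_left₀ (norm_nonneg _) (hmono x n m hm) 2⟩)
      have : ‖x‖ ≤ ‖(T ^ n) x‖ := by nlinarith [norm_nonneg x, norm_nonneg ((T ^ n) x)]
      exact le_antisymm (hpow n x) this
    · intro h
      have hlim2 : Tendsto (fun n : ℕ => ‖(T ^ n) x‖ ^ 2) atTop (nhds (‖x‖ ^ 2)) := by
        refine tendsto_const_nhds.congr' ?_
        filter_upwards [eventually_ge_atTop 1] with n hn
        rw [h n hn]
      have hre : Complex.re ⟪A x, x⟫ = ‖x‖ ^ 2 := tendsto_nhds_unique (hsq x) hlim2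
      have hAx : ‖A x‖ ≤ ‖x‖ := by
        refine le_of_tendsto ((hA x).norm) (Eventually.of_forall fun n => ?_)
        calc ‖(((adjoint T) ^ n) ∘L (T ^ n)) x‖ ≤ ‖(adjoint T) ^ n‖ * ‖(T ^ n) x‖ := by
              rw [comp_apply]; exact le_opNorm _ _
        _ ≤ 1 * ‖x‖ := by
              refine mul_le_mul ?_ (hpow n x) (norm_nonneg _) zero_le_one
              rw [hadjpow, LinearIsometryEquiv.norm_map adjoint]; exact hTn n
        _ = ‖x‖ := one_mul _
      have hz : ‖A x - x‖ ^ 2 ≤ 0 := by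
        rw [norm_sub_sq (𝕜 := ℂ)]
        have : RCLike.re ⟪A x, x⟫ = ‖x‖ ^ 2 := hre
        nlinarith [norm_nonneg x, norm_nonneg (A x)]
      have : ‖A x - x‖ = 0 := le_antisymm (by nlinarith [norm_nonneg (A x - x)]) (norm_nonneg _)
      rwa [norm_eq_zero, sub_eq_zero] at this
  refine ⟨main, ?_, ?_⟩
  · intro hiso
    ext x
    have : ∀ n : ℕ, ‖(T ^ n) x‖ = ‖x‖ := by
      intro n
      induction n with
      | zero => simp
      | succ n ih => rw [pow_succ', ContinuousLinearMap.mul_apply, hiso, ih]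
    simpa using (main x).2 fun n _ => this n
  · intro hA1 x
    have := ((main x).1 (by rw [hA1]; rfl)) 1 le_rfl
    simpa using this
end

section
/- Let T be a contraction on a complex Hilbert space with asymptotic limit A. If A commutes with T then A is idempotent: A = A². -/
open ContinuousLinearMap Filter

/-- Proposition 5.1(f), one direction: for a contraction `T` with asymptotic limit `A`,
if `A` commutes with `T` then `A = A²`. -/
theorem stmt10 {X : Type*} [NormedAddCommGroup X] [InnerProductSpace ℂ X] [CompleteSpace X]
    (T A : X →L[ℂ] X) (hT : ‖T‖ ≤ 1)
    (hA : ∀ x : X, Tendsto (fun n : ℕ => (((adjoint T) ^ n) ∘L (T ^ n)) x) atTop (nhds (A x)))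
    (hcomm : A ∘L T = T ∘L A) :
    A = A ∘L A := by
  -- Step 1: T* A T = A
  have hTAT : ∀ x : X, A x = adjoint T (A (T x)) := by
    intro x
    have h1 : Tendsto (fun n : ℕ => (((adjoint T) ^ (n + 1)) ∘L (T ^ (n + 1))) x) atTop
        (nhds (A x)) := (hA x).comp (tendsto_add_atTop_nat 1)
    have h2 : (fun n : ℕ => (((adjoint T) ^ (n + 1)) ∘L (T ^ (n + 1))) x)
        = fun n : ℕ => adjoint T ((((adjoint T) ^ n) ∘L (T ^ n)) (T x)) := by
      funext n
      simp only [comp_apply, pow_succ, pow_succ', mul_apply_eq_comp]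
      rw [← mul_apply_eq_comp, ← pow_succ, pow_succ', mul_apply_eq_comp]
    rw [h2] at h1
    have h3 : Tendsto (fun n : ℕ => adjoint T ((((adjoint T) ^ n) ∘L (T ^ n)) (T x))) atTop
        (nhds (adjoint T (A (T x)))) :=
      ((adjoint T).continuous.tendsto _).comp (hA (T x))
    exact tendsto_nhds_unique h1 h3
  -- commutation with powers
  have hc : ∀ (n : ℕ) (x : X), A ((T ^ n) x) = (T ^ n) (A x) := by
    intro n
    induction n with
    | zero => simp
    | succ n ih =>
      intro x
      have hAT : ∀ y, A (T y) = T (A y) := fun y => congrFun (congrArg DFunLike.coe hcomm) y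
      simp only [pow_succ, mul_apply_eq_comp, ih, hAT]
  -- A = T*^n A T^n
  have hn : ∀ (n : ℕ) (x : X), A x = ((adjoint T) ^ n) (A ((T ^ n) x)) := by
    intro n
    induction n with
    | zero => simp
    | succ n ih =>
      intro x
      rw [ih x, hTAT ((T ^ n) x)]
      simp only [pow_succ, mul_apply_eq_comp]
      have h : T ((T ^ n) x) = (T ^ n) (T x) := by
        rw [← mul_apply_eq_comp, ← pow_succ', pow_succ, mul_apply_eq_comp]
      rw [h]
  -- Hence (T*^n T^n)(A x) = A x for all n
  have hfix : ∀ (n : ℕ) (x : X), (((adjoint T) ^ n) ∘L (T ^ n)) (A x) = A x := by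
    intro n x
    rw [comp_apply, ← hc n x, ← hn n x]
  ext x
  have h1 : Tendsto (fun n : ℕ => (((adjoint T) ^ n) ∘L (T ^ n)) (A x)) atTop
      (nhds (A (A x))) := hA (A x)
  have h2 : Tendsto (fun n : ℕ => (((adjoint T) ^ n) ∘L (T ^ n)) (A x)) atTop
      (nhds (A x)) := by
    simp only [hfix]
    exact tendsto_const_nhds
  simpa using (tendsto_nhds_unique h2 h1)
end

section
/- Let T be a contraction on a complex Hilbert space with asymptotic limit A. Then (I − A) T^n converges strongly to O, i.e., ‖(I − A) T^n x‖ → 0 for every x. -/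
open ContinuousLinearMap Filter

open scoped InnerProductSpace

/-- Proposition 5.1(g): for a contraction `T` with asymptotic limit `A`,
`(I - A) T^n → O` strongly. -/
theorem stmt11 {X : Type*} [NormedAddCommGroup X] [InnerProductSpace ℂ X] [CompleteSpace X]
    (T A : X →L[ℂ] X) (hT : ‖T‖ ≤ 1)
    (hA : ∀ x : X, Tendsto (fun n : ℕ => (((adjoint T) ^ n) ∘L (T ^ n)) x) atTop (nhds (A x))) :
    ∀ x : X, Tendsto (fun n : ℕ => ((1 - A) ∘L T ^ n) x) atTop (nhds 0) := by
  intro x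
  -- powers of a contraction are contractions
  have hcontr : ∀ (m : ℕ) (z : X), ‖(T ^ m) z‖ ≤ ‖z‖ := by
    intro m
    induction m with
    | zero => intro z; simp
    | succ n ih =>
      intro z
      have h1 : (T ^ (n + 1)) z = (T ^ n) (T z) := by rw [pow_succ, mul_apply_eq_comp]
      rw [h1]
      refine (ih (T z)).trans ((T.le_opNorm z).trans ?_)
      exact mul_le_of_le_one_left (norm_nonneg z) hT
  -- key inner product identity
  have hinner : ∀ (m : ℕ) (z w : X),
      ⟪(((adjoint T) ^ m) ∘L (T ^ m)) z, w⟫_ℂ = ⟪(T ^ m) z, (T ^ m) w⟫_ℂ := by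
    intro m z w
    have hpow : (adjoint T) ^ m = adjoint (T ^ m) := by
      rw [← star_eq_adjoint, ← star_eq_adjoint, ← star_pow]
    rw [comp_apply, hpow, adjoint_inner_left]
  -- the limit of ‖T^k x‖²
  set b : ℕ → ℝ := fun k => ‖(T ^ k) x‖ with hb
  set L : ℝ := RCLike.re (⟪A x, x⟫_ℂ) with hLdef
  have hbL : Tendsto (fun k => (b k) ^ 2) atTop (nhds L) := by
    have h1 : Tendsto (fun k : ℕ => ⟪(((adjoint T) ^ k) ∘L (T ^ k)) x, x⟫_ℂ) atTop
        (nhds ⟪A x, x⟫_ℂ) := (hA x).inner tendsto_const_nhds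
    have h2 : ∀ k : ℕ, ⟪(((adjoint T) ^ k) ∘L (T ^ k)) x, x⟫_ℂ = ((b k) ^ 2 : ℝ) := by
      intro k
      rw [hinner, inner_self_eq_norm_sq_to_K]
      norm_cast
    have h3 : Tendsto (fun k : ℕ => (((b k) ^ 2 : ℝ) : ℂ)) atTop (nhds ⟪A x, x⟫_ℂ) := by
      simpa only [h2] using h1
    exact ((Complex.continuous_re.tendsto _).comp h3).congr fun k => Complex.ofReal_re _
  have hL0 : 0 ≤ L :=
    le_of_tendsto_of_tendsto' tendsto_const_nhds hbL (fun k => sq_nonneg _)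
  have hbs : Tendsto b atTop (nhds (Real.sqrt L)) := by
    exact ((Real.continuous_sqrt.tendsto _).comp hbL).congr fun k => Real.sqrt_sq (norm_nonneg _)
  -- main estimate for y = T^n x
  have key : ∀ n : ℕ, ‖((1 - A) ∘L T ^ n) x‖ ^ 2 ≤ b n ^ 2 - L := by
    intro n
    set y : X := (T ^ n) x with hy
    -- ⟪A y, y⟫ = L
    have hAyy : ⟪A y, y⟫_ℂ = (L : ℂ) := by
      have h1 : Tendsto (fun m : ℕ => ⟪(((adjoint T) ^ m) ∘L (T ^ m)) y, y⟫_ℂ) atTop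
          (nhds ⟪A y, y⟫_ℂ) := (hA y).inner tendsto_const_nhds
      have h2 : ∀ m : ℕ, ⟪(((adjoint T) ^ m) ∘L (T ^ m)) y, y⟫_ℂ = ((b (m + n)) ^ 2 : ℝ) := by
        intro m
        rw [hinner, inner_self_eq_norm_sq_to_K, hy]
        have : (T ^ m) ((T ^ n) x) = (T ^ (m + n)) x := by rw [pow_add, mul_apply_eq_comp]
        rw [this]
        norm_cast
      have h3 : Tendsto (fun m : ℕ => (((b (m + n)) ^ 2 : ℝ) : ℂ)) atTop (nhds ((L : ℝ) : ℂ)) := by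
        have := hbL.comp (tendsto_add_atTop_nat n)
        exact (Complex.continuous_ofReal.tendsto _).comp this
      have h4 : Tendsto (fun m : ℕ => ⟪(((adjoint T) ^ m) ∘L (T ^ m)) y, y⟫_ℂ) atTop
          (nhds ((L : ℝ) : ℂ)) := by simpa only [h2] using h3
      exact tendsto_nhds_unique h1 h4
    -- ‖A y‖ ≤ √L
    have hAy : ‖A y‖ ^ 2 ≤ L := by
      have h1 : Tendsto (fun m : ℕ => ⟪(((adjoint T) ^ m) ∘L (T ^ m)) y, A y⟫_ℂ) atTop
          (nhds ⟪A y, A y⟫_ℂ) := (hA y).inner tendsto_const_nhds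
      have h1' : Tendsto (fun m : ℕ =>
          RCLike.re ⟪(((adjoint T) ^ m) ∘L (T ^ m)) y, A y⟫_ℂ) atTop (nhds (‖A y‖ ^ 2)) := by
        have := (RCLike.continuous_re.tendsto _).comp h1
        rw [inner_self_eq_norm_sq_to_K, ← RCLike.ofReal_pow, RCLike.ofReal_re] at this
        exact this
      have hbd : ∀ m : ℕ,
          RCLike.re ⟪(((adjoint T) ^ m) ∘L (T ^ m)) y, A y⟫_ℂ ≤ b (m + n) * ‖A y‖ := by
        intro m
        rw [hinner]
        have h5 : (T ^ m) y = (T ^ (m + n)) x := by rw [hy, pow_add, mul_apply_eq_comp]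
        calc RCLike.re ⟪(T ^ m) y, (T ^ m) (A y)⟫_ℂ
            ≤ ‖⟪(T ^ m) y, (T ^ m) (A y)⟫_ℂ‖ := RCLike.re_le_norm _
          _ ≤ ‖(T ^ m) y‖ * ‖(T ^ m) (A y)‖ := norm_inner_le_norm _ _
          _ ≤ b (m + n) * ‖A y‖ := by
              rw [h5]
              exact mul_le_mul_of_nonneg_left (hcontr m (A y)) (norm_nonneg _)
      have h6 : Tendsto (fun m : ℕ => b (m + n) * ‖A y‖) atTop
          (nhds (Real.sqrt L * ‖A y‖)) :=
        (hbs.comp (tendsto_add_atTop_nat n)).mul tendsto_const_nhds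
      have h7 : ‖A y‖ ^ 2 ≤ Real.sqrt L * ‖A y‖ :=
        le_of_tendsto_of_tendsto' h1' h6 hbd
      rcases eq_or_lt_of_le (norm_nonneg (A y)) with h | h
      · rw [← h]; simpa using hL0
      · have h8 : ‖A y‖ ≤ Real.sqrt L := by nlinarith [h7, h]
        calc ‖A y‖ ^ 2 ≤ Real.sqrt L ^ 2 :=
              pow_le_pow_left₀ (norm_nonneg _) h8 2
          _ = L := Real.sq_sqrt hL0
    -- now expand the square
    have hexp : ((1 - A) ∘L T ^ n) x = y - A y := by
      simp [comp_apply, sub_apply, hy]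
    rw [hexp, @norm_sub_sq ℂ]
    have hre : RCLike.re ⟪y, A y⟫_ℂ = L := by
      rw [← inner_conj_symm, RCLike.conj_re, hAyy]
      simp
    have hyn : ‖y‖ = b n := rfl
    rw [hre, hyn]
    nlinarith [hAy]
  -- squeeze
  rw [tendsto_zero_iff_norm_tendsto_zero]
  have hsq : Tendsto (fun n : ℕ => ‖((1 - A) ∘L T ^ n) x‖ ^ 2) atTop (nhds 0) := by
    apply squeeze_zero (fun n => sq_nonneg _) key
    simpa using hbL.sub (tendsto_const_nhds (x := L))
  simpa using ((Real.continuous_sqrt.tendsto _).comp hsq).congr fun n => Real.sqrt_sq (norm_nonneg _)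
end

section
/- Let T be a bounded operator on a complex Hilbert space such that the Cesàro means Q_n = (1/n) Σ_{k=0}^{n-1} T*^k T^k converge weakly to Q. Then Q ≥ O and T* Q T = Q; equivalently ‖Q^{1/2} T^n x‖ = ‖Q^{1/2} x‖ for every x and every n ≥ 0. -/
open ContinuousLinearMap Filter

/-- Theorem 7.1(a,b,c): if the Cesàro means `Q_n = (1/n) Σ_{k<n} T*^k T^k` converge weakly
to `Q`, then `Q ≥ O`, `T* Q T = Q`, and (equivalently) `‖Q^{1/2} T^n x‖ = ‖Q^{1/2} x‖`
for every `x` and `n ≥ 0`, where `Q^{1/2}` is the nonnegative square root of `Q`. -/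
theorem stmt18 {X : Type*} [NormedAddCommGroup X] [InnerProductSpace ℂ X] [CompleteSpace X]
    (T Q : X →L[ℂ] X)
    (hw : ∀ x y : X,
      Tendsto (fun n : ℕ =>
          (inner ℂ (((1 / (n : ℂ)) • ∑ k ∈ Finset.range n, ((adjoint T) ^ k) ∘L (T ^ k)) x) y : ℂ))
        atTop (nhds (inner ℂ (Q x) y))) :
    Q.IsPositive ∧ adjoint T ∘L (Q ∘L T) = Q ∧
      ∀ S : X →L[ℂ] X, S.IsPositive → S ∘L S = Q →
        ∀ (x : X) (n : ℕ), ‖S ((T ^ n) x)‖ = ‖S x‖ := by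
  -- scalar form of the Cesàro means
  have hAval : ∀ (n : ℕ) (x y : X),
      (inner ℂ (((1 / (n : ℂ)) • ∑ k ∈ Finset.range n, ((adjoint T) ^ k) ∘L (T ^ k)) x) y : ℂ)
        = (1 / (n : ℂ)) * ∑ k ∈ Finset.range n, (inner ℂ ((T ^ k) x) ((T ^ k) y) : ℂ) := by
    intro n x y
    simp only [coe_smul', Pi.smul_apply, inner_smul_left, sum_apply, sum_inner, comp_apply,
      map_div₀, map_one, map_natCast]
    congr 1
    refine Finset.sum_congr rfl fun k _ => ?_
    rw [← star_eq_adjoint, ← star_pow, star_eq_adjoint, adjoint_inner_left]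
  have hw2 : ∀ x y : X,
      Tendsto (fun n : ℕ => (1 / (n : ℂ)) * ∑ k ∈ Finset.range n,
        (inner ℂ ((T ^ k) x) ((T ^ k) y) : ℂ)) atTop (nhds (inner ℂ (Q x) y)) := by
    intro x y
    exact (hw x y).congr fun n => hAval n x y
  have h1n : Tendsto (fun n : ℕ => (1 : ℂ) / n) atTop (nhds 0) := by
    have h := (Complex.continuous_ofReal.tendsto 0).comp tendsto_one_div_atTop_nhds_zero_nat
    simp only [Complex.ofReal_zero] at h
    refine Tendsto.congr (fun n => ?_) h
    simp [Function.comp]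
  -- part (b) at the level of inner products
  have hbinner : ∀ x y : X, (inner ℂ (Q (T x)) (T y) : ℂ) = inner ℂ (Q x) y := by
    intro x y
    have h1 : Tendsto (fun n : ℕ => (1 / (n : ℂ)) * ∑ k ∈ Finset.range n,
        (inner ℂ ((T ^ (k + 1)) x) ((T ^ (k + 1)) y) : ℂ)) atTop (nhds (inner ℂ (Q (T x)) (T y))) := by
      refine (hw2 (T x) (T y)).congr fun n => ?_
      have he : ∀ k : ℕ, (inner ℂ ((T ^ k) (T x)) ((T ^ k) (T y)) : ℂ)
          = inner ℂ ((T ^ (k + 1)) x) ((T ^ (k + 1)) y) := fun k => by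
        simp [pow_succ, mul_apply]
      simp only [he]
    have hc : Tendsto (fun n : ℕ => ((n : ℂ) + 1) / n) atTop (nhds 1) := by
      have h : Tendsto (fun n : ℕ => (1 : ℂ) + 1 / n) atTop (nhds (1 + 0)) :=
        tendsto_const_nhds.add h1n
      rw [add_zero] at h
      refine h.congr' ?_
      filter_upwards [eventually_ge_atTop 1] with n hn
      have hn0 : (n : ℂ) ≠ 0 := Nat.cast_ne_zero.2 (by omega)
      field_simp
    have ha : Tendsto (fun n : ℕ => (1 / ((n : ℂ) + 1)) * ∑ k ∈ Finset.range (n + 1),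
        (inner ℂ ((T ^ k) x) ((T ^ k) y) : ℂ)) atTop (nhds (inner ℂ (Q x) y)) := by
      have h := (hw2 x y).comp (tendsto_add_atTop_nat 1)
      refine h.congr fun n => ?_
      simp [Function.comp]
    have hz : Tendsto (fun n : ℕ => (1 / (n : ℂ)) * (inner ℂ x y : ℂ)) atTop (nhds 0) := by
      simpa using h1n.mul_const (inner ℂ x y : ℂ)
    have h2 : Tendsto (fun n : ℕ => ((n : ℂ) + 1) / n * ((1 / ((n : ℂ) + 1)) *
        ∑ k ∈ Finset.range (n + 1), (inner ℂ ((T ^ k) x) ((T ^ k) y) : ℂ))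
        - (1 / (n : ℂ)) * (inner ℂ x y : ℂ)) atTop (nhds (inner ℂ (Q x) y)) := by
      simpa using (hc.mul ha).sub hz
    have heq : (fun n : ℕ => ((n : ℂ) + 1) / n * ((1 / ((n : ℂ) + 1)) *
        ∑ k ∈ Finset.range (n + 1), (inner ℂ ((T ^ k) x) ((T ^ k) y) : ℂ))
        - (1 / (n : ℂ)) * (inner ℂ x y : ℂ)) =ᶠ[atTop]
        (fun n : ℕ => (1 / (n : ℂ)) * ∑ k ∈ Finset.range n,
          (inner ℂ ((T ^ (k + 1)) x) ((T ^ (k + 1)) y) : ℂ)) := by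
      filter_upwards [eventually_ge_atTop 1] with n hn
      have hn0 : (n : ℂ) ≠ 0 := Nat.cast_ne_zero.2 (by omega)
      have hn1 : ((n : ℂ) + 1) ≠ 0 := by
        have := Nat.cast_add_one_ne_zero (R := ℂ) n
        push_cast at this
        exact this
      rw [Finset.sum_range_succ']
      simp only [pow_zero, ContinuousLinearMap.one_apply]
      field_simp
      ring
    exact tendsto_nhds_unique h1 (h2.congr' heq)
  -- operator form of part (b)
  have hb : adjoint T ∘L (Q ∘L T) = Q := by
    ext x
    refine ext_inner_right ℂ fun y => ?_
    rw [comp_apply, comp_apply, adjoint_inner_left]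
    exact hbinner x y
  -- self-adjointness of Q
  have hsa : IsSelfAdjoint Q := by
    rw [isSelfAdjoint_iff']
    ext x
    refine ext_inner_right ℂ fun y => ?_
    rw [adjoint_inner_left]
    have h1 := hw2 x y
    have h2 : Tendsto (fun n : ℕ => (1 / (n : ℂ)) * ∑ k ∈ Finset.range n,
        (inner ℂ ((T ^ k) x) ((T ^ k) y) : ℂ)) atTop (nhds (inner ℂ x (Q y))) := by
      have h := (Complex.continuous_conj.tendsto _).comp (hw2 y x)
      refine Tendsto.congr (fun n => ?_) (by simpa [inner_conj_symm] using h)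
      simp [map_mul, map_sum, inner_conj_symm, map_div₀, map_one, map_natCast]
    exact tendsto_nhds_unique h2 h1
  -- positivity of Q
  have hpos : Q.IsPositive := by
    refine ⟨hsa.isSymmetric, fun x => ?_⟩
    have h := (Complex.continuous_re.tendsto _).comp (hw2 x x)
    refine ge_of_tendsto h ?_
    filter_upwards with n
    have hv : ((1 / (n : ℂ)) * ∑ k ∈ Finset.range n, (inner ℂ ((T ^ k) x) ((T ^ k) x) : ℂ))
        = (((1 / (n : ℝ)) * ∑ k ∈ Finset.range n, ‖(T ^ k) x‖ ^ 2 : ℝ) : ℂ) := by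
      push_cast [inner_self_eq_norm_sq_to_K]
      norm_cast
    simp only [Function.comp_apply, hv, Complex.ofReal_re]
    positivity
  refine ⟨hpos, hb, ?_⟩
  -- part (c)
  intro S hS hSS x n
  have hQn : ∀ m : ℕ, (inner ℂ (Q ((T ^ m) x)) ((T ^ m) x) : ℂ) = inner ℂ (Q x) x := by
    intro m
    induction m with
    | zero => simp
    | succ m ih =>
      rw [pow_succ']
      simp only [ContinuousLinearMap.mul_apply]
      rw [hbinner]
      exact ih
  have hnorm : ∀ v : X, (‖S v‖ : ℝ) ^ 2 = (inner ℂ (Q v) v : ℂ).re := by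
    intro v
    have h1 : (inner ℂ (Q v) v : ℂ) = inner ℂ (S v) (S v) := by
      rw [← hSS, comp_apply]
      exact hS.1 (S v) v
    rw [h1, inner_self_eq_norm_sq_to_K]
    norm_cast
  have h := hnorm ((T ^ n) x)
  rw [hQn n, ← hnorm x] at h
  have h' := congrArg Real.sqrt h
  rwa [Real.sqrt_sq (norm_nonneg _), Real.sqrt_sq (norm_nonneg _)] at h'
end
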